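/- arXiv:2106.00809 — 5 statements merged into one kernel-verified Lean document; each statement's English description precedes it below -/
import Mathlib

section
/- Let N ⊂ ℝ² be a closed convex set containing the compact set M, and let Σ be a compact connected set with F_M(Σ) ≤ r. Then the image of Σ under the metric projection onto N is connected, satisfies F_M ≤ r, and has one-dimensional Hausdorff measure at most that of Σ. -/
open MeasureTheory Metric

/-! The metric projection is 1-Lipschitz: adding the variational inequalities at two points shows
it is even firmly nonexpansive. Hence it preserves connectedness and does not increase `ℋ¹`, and
since it fixes every `y ∈ M ⊆ N`, it brings no point of `Sig` farther from such a `y`. -/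

section NearestPoint

variable {E : Type*} [NormedAddCommGroup E] [InnerProductSpace ℝ E]

theorem real_inner_sub_nonpos_of_dist_eq_infDist {N : Set E} (hN : Convex ℝ N) {x p : E}
    (hp : p ∈ N) (hdist : dist x p = infDist x N) : ∀ w ∈ N, inner ℝ (x - p) (w - p) ≤ 0 :=
  (norm_eq_iInf_iff_real_inner_le_zero hN hp).1 <| by
    simpa only [dist_eq_norm, infDist_eq_iInf] using hdist

theorem lipschitzWith_one_of_dist_eq_infDist {N : Set E} (hN : Convex ℝ N) {proj : E → E}
    (hmem : ∀ x, proj x ∈ N) (hnearest : ∀ x, dist x (proj x) = infDist x N) :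
    LipschitzWith 1 proj := by
  refine LipschitzWith.of_dist_le_mul fun x y => ?_
  have hx := real_inner_sub_nonpos_of_dist_eq_infDist hN (hmem x) (hnearest x) _ (hmem y)
  have hy := real_inner_sub_nonpos_of_dist_eq_infDist hN (hmem y) (hnearest y) _ (hmem x)
  have hfirm : ‖proj x - proj y‖ ^ 2 ≤ inner ℝ (x - y) (proj x - proj y) :=
    calc ‖proj x - proj y‖ ^ 2
        = inner ℝ (x - y) (proj x - proj y) + (inner ℝ (x - proj x) (proj y - proj x)
            + inner ℝ (y - proj y) (proj x - proj y)) := by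
          rw [← real_inner_self_eq_norm_sq]
          simp only [inner_sub_left, inner_sub_right, real_inner_comm]
          ring
      _ ≤ inner ℝ (x - y) (proj x - proj y) := by linarith
  have hcs := real_inner_le_norm (x - y) (proj x - proj y)
  rw [NNReal.coe_one, one_mul, dist_eq_norm, dist_eq_norm]
  nlinarith [norm_nonneg (proj x - proj y), norm_nonneg (x - y)]

end NearestPoint

theorem eq_of_dist_eq_infDist_of_mem {α : Type*} [MetricSpace α] {N : Set α} {x p : α}
    (hdist : dist x p = infDist x N) (hx : x ∈ N) : p = x :=
  (dist_eq_zero.1 (hdist.trans (infDist_zero_of_mem hx))).symm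

theorem LipschitzWith.infDist_image_le_mul {α β : Type*} [PseudoMetricSpace α]
    [PseudoMetricSpace β] {K : NNReal} {f : α → β} (hf : LipschitzWith K f) (x : α)
    (s : Set α) : infDist (f x) (f '' s) ≤ K * infDist x s := by
  rcases s.eq_empty_or_nonempty with rfl | hs
  · simp
  have : Nonempty s := hs.to_subtype
  rw [infDist_eq_iInf (x := x), Real.mul_iInf_of_nonneg K.coe_nonneg]
  refine le_ciInf fun ⟨y, hy⟩ => ?_
  exact (infDist_le_dist_of_mem (Set.mem_image_of_mem f hy)).trans (hf.dist_le_mul x y)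

theorem projection_image_connected_covers_and_shorter_general
    (N M Sig : Set (EuclideanSpace ℝ (Fin 2))) (r : ℝ)
    (hNconv : Convex ℝ N) (hMN : M ⊆ N)
    (hSigConn : IsConnected Sig)
    (hF : ∀ y ∈ M, infDist y Sig ≤ r)
    (proj : EuclideanSpace ℝ (Fin 2) → EuclideanSpace ℝ (Fin 2))
    (hprojMem : ∀ x, proj x ∈ N)
    (hprojNearest : ∀ x, dist x (proj x) = infDist x N) :
    IsConnected (proj '' Sig) ∧ (∀ y ∈ M, infDist y (proj '' Sig) ≤ r) ∧
      μH[1] (proj '' Sig) ≤ μH[1] Sig := by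
  have hlip := lipschitzWith_one_of_dist_eq_infDist hNconv hprojMem hprojNearest
  refine ⟨hSigConn.image proj hlip.continuous.continuousOn, fun y hy => ?_, ?_⟩
  · calc infDist y (proj '' Sig)
        = infDist (proj y) (proj '' Sig) := by
          rw [eq_of_dist_eq_infDist_of_mem (hprojNearest y) (hMN hy)]
      _ ≤ 1 * infDist y Sig := hlip.infDist_image_le_mul y Sig
      _ ≤ r := by simpa using hF y hy
  · simpa using hlip.hausdorffMeasure_image_le zero_le_one Sig

/-- Let `N ⊆ ℝ²` be a closed convex set containing the compact set `M`, let `Sig` be a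
compact connected set with `F_M(Sig) ≤ r`, and let `proj` be the metric projection onto `N`
(the nearest-point map). Then the image of `Sig` under `proj` is connected, satisfies
`F_M ≤ r`, and has one-dimensional Hausdorff measure at most that of `Sig`. -/
theorem projection_image_connected_covers_and_shorter
    (N M Sig : Set (EuclideanSpace ℝ (Fin 2))) (r : ℝ)
    (hN : IsClosed N) (hNconv : Convex ℝ N) (hMN : M ⊆ N) (hM : IsCompact M)
    (hSigC : IsCompact Sig) (hSigConn : IsConnected Sig)
    (hF : ∀ y ∈ M, infDist y Sig ≤ r)
    (proj : EuclideanSpace ℝ (Fin 2) → EuclideanSpace ℝ (Fin 2))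
    (hprojMem : ∀ x, proj x ∈ N)
    (hprojNearest : ∀ x, dist x (proj x) = infDist x N) :
    IsConnected (proj '' Sig) ∧ (∀ y ∈ M, infDist y (proj '' Sig) ≤ r) ∧
      μH[1] (proj '' Sig) ≤ μH[1] Sig :=
  projection_image_connected_covers_and_shorter_general N M Sig r hNconv hMN hSigConn hF proj
    hprojMem hprojNearest
end

section
/- Let x₁, x₂, x₃ form a triangle with all angles less than 2π/3 and let T be its Fermat–Torricelli point. Then |x₁T| + |x₂T| + |x₃T| equals the distance |X x₃|, where X is the apex of the equilateral triangle erected outwardly on x₁x₂. -/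
open Real EuclideanGeometry

open RealInnerProductSpace in
private lemma angle_inner_aux {V : Type*} [NormedAddCommGroup V] [InnerProductSpace ℝ V] {x y : V}
    (h : InnerProductGeometry.angle x y = 2 * π / 3) :
    ⟪x, y⟫ = -(1/2) * (‖x‖ * ‖y‖) ∧ x ≠ 0 ∧ y ≠ 0 := by
  have hpi := Real.pi_pos
  have hx : x ≠ 0 := by
    rintro rfl; rw [InnerProductGeometry.angle_zero_left] at h; linarith
  have hy : y ≠ 0 := by
    rintro rfl; rw [InnerProductGeometry.angle_zero_right] at h; linarith
  have hc := InnerProductGeometry.cos_angle x y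
  rw [h] at hc
  have h23 : Real.cos (2 * π / 3) = -(1/2) := by
    have he : 2 * π / 3 = π - π/3 := by ring
    rw [he, Real.cos_pi_sub, Real.cos_pi_div_three]
  rw [h23] at hc
  have hxn : ‖x‖ ≠ 0 := by simpa using hx
  have hyn : ‖y‖ ≠ 0 := by simpa using hy
  refine ⟨?_, hx, hy⟩
  field_simp at hc
  linarith

open RealInnerProductSpace in
set_option maxHeartbeats 2000000 in
/-- Let `x₁ x₂ x₃` be a triangle all of whose angles are less than `2π/3`, `T` its
Fermat–Torricelli point, and `X` the apex of the equilateral triangle erected outwardly on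
`x₁x₂`. Then `|x₁T| + |x₂T| + |x₃T| = |X x₃|`. -/
theorem fermat_point_total_distance_eq
    (x₁ x₂ x₃ T X : EuclideanSpace ℝ (Fin 2))
    (hnd : AffineIndependent ℝ ![x₁, x₂, x₃])
    (hang₁ : ∠ x₂ x₁ x₃ < 2 * π / 3)
    (hang₂ : ∠ x₁ x₂ x₃ < 2 * π / 3)
    (hang₃ : ∠ x₁ x₃ x₂ < 2 * π / 3)
    (hT₁ : ∠ x₁ T x₂ = 2 * π / 3)
    (hT₂ : ∠ x₂ T x₃ = 2 * π / 3)
    (hT₃ : ∠ x₃ T x₁ = 2 * π / 3)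
    (hX₁ : dist X x₁ = dist x₁ x₂)
    (hX₂ : dist X x₂ = dist x₁ x₂)
    (hXside : (affineSpan ℝ ({x₁, x₂} : Set (EuclideanSpace ℝ (Fin 2)))).SOppSide X x₃) :
    dist x₁ T + dist x₂ T + dist x₃ T = dist X x₃ := by
  set v₁ : EuclideanSpace ℝ (Fin 2) := x₁ - T with hv₁
  set v₂ : EuclideanSpace ℝ (Fin 2) := x₂ - T with hv₂
  set v₃ : EuclideanSpace ℝ (Fin 2) := x₃ - T with hv₃
  have ha1 : InnerProductGeometry.angle v₁ v₂ = 2 * π / 3 := by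
    rw [← hT₁]; simp [EuclideanGeometry.angle, vsub_eq_sub, hv₁, hv₂]
  have ha2 : InnerProductGeometry.angle v₂ v₃ = 2 * π / 3 := by
    rw [← hT₂]; simp [EuclideanGeometry.angle, vsub_eq_sub, hv₂, hv₃]
  have ha3 : InnerProductGeometry.angle v₃ v₁ = 2 * π / 3 := by
    rw [← hT₃]; simp [EuclideanGeometry.angle, vsub_eq_sub, hv₃, hv₁]
  obtain ⟨h12, hv1ne, hv2ne⟩ := angle_inner_aux ha1
  obtain ⟨h23, -, hv3ne⟩ := angle_inner_aux ha2
  obtain ⟨h31, -, -⟩ := angle_inner_aux ha3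
  set a : ℝ := ‖v₁‖ with hadef
  set b : ℝ := ‖v₂‖ with hbdef
  set c : ℝ := ‖v₃‖ with hcdef
  have ha : 0 < a := norm_pos_iff.2 hv1ne
  have hb : 0 < b := norm_pos_iff.2 hv2ne
  have hc : 0 < c := norm_pos_iff.2 hv3ne
  have h11 : ⟪v₁, v₁⟫ = a^2 := real_inner_self_eq_norm_sq v₁
  have h21 : ⟪v₂, v₁⟫ = -(1/2) * (a*b) := by rw [real_inner_comm]; exact h12
  have h22 : ⟪v₂, v₂⟫ = b^2 := real_inner_self_eq_norm_sq v₂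
  have h33 : ⟪v₃, v₃⟫ = c^2 := real_inner_self_eq_norm_sq v₃
  -- general inner product formula
  have ipgen : ∀ s t u w : ℝ, ⟪s•v₁+t•v₂, u•v₁+w•v₂⟫
      = s*u*a^2 + t*w*b^2 - (s*w+t*u)*((1/2)*(a*b)) := by
    intro s t u w
    simp only [inner_add_left, inner_add_right, real_inner_smul_left, real_inner_smul_right,
      h11, h22, h12, h21]
    ring
  have ip1 : ∀ s t : ℝ, ⟪s•v₁+t•v₂, v₁⟫ = s*a^2 - t*((1/2)*(a*b)) := by
    intro s t
    simp only [inner_add_left, real_inner_smul_left, h11, h12, h21]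
    ring
  have ip2 : ∀ s t : ℝ, ⟪s•v₁+t•v₂, v₂⟫ = t*b^2 - s*((1/2)*(a*b)) := by
    intro s t
    simp only [inner_add_left, real_inner_smul_left, h22, h12, h21]
    ring
  -- linear independence
  have hli : ∀ s t : ℝ, s • v₁ + t • v₂ = 0 → s = 0 ∧ t = 0 := by
    intro s t hst
    have e1 : s*a^2 - t*((1/2)*(a*b)) = 0 := by rw [← ip1 s t, hst, inner_zero_left]
    have e2 : t*b^2 - s*((1/2)*(a*b)) = 0 := by rw [← ip2 s t, hst, inner_zero_left]
    constructor
    · have h1 : ((3/4)*a^2*b^2) * s = ((3/4)*a^2*b^2) * 0 := by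
        linear_combination b^2 * e1 + ((1/2)*(a*b)) * e2
      exact mul_left_cancel₀ (by positivity) h1
    · have h1 : ((3/4)*a^2*b^2) * t = ((3/4)*a^2*b^2) * 0 := by
        linear_combination a^2 * e2 + ((1/2)*(a*b)) * e1
      exact mul_left_cancel₀ (by positivity) h1
  have huniq : ∀ s t s' t' : ℝ, s•v₁+t•v₂ = s'•v₁+t'•v₂ → s = s' ∧ t = t' := by
    intro s t s' t' h
    have h0 : (s - s')•v₁ + (t - t')•v₂ = 0 := by
      rw [sub_smul, sub_smul, show s•v₁ - s'•v₁ + (t•v₂ - t'•v₂)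
        = (s•v₁+t•v₂) - (s'•v₁+t'•v₂) from by abel, h, sub_self]
    obtain ⟨h1, h2⟩ := hli _ _ h0
    exact ⟨by linarith, by linarith⟩
  -- spanning
  have hspan : ∀ w : EuclideanSpace ℝ (Fin 2), ∃ s t : ℝ, w = s • v₁ + t • v₂ := by
    have hli' : LinearIndependent ℝ ![v₁, v₂] := LinearIndependent.pair_iff.2 fun s t h => hli s t h
    have hcard : Fintype.card (Fin 2) = Module.finrank ℝ (EuclideanSpace ℝ (Fin 2)) := by
      simp [finrank_euclideanSpace_fin]
    have htop := hli'.span_eq_top_of_card_eq_finrank hcard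
    intro w
    have hw : w ∈ Submodule.span ℝ (Set.range ![v₁, v₂]) := htop ▸ Submodule.mem_top
    have hrange : Set.range ![v₁, v₂] = {v₁, v₂} := by
      ext z
      constructor
      · rintro ⟨i, rfl⟩
        fin_cases i <;> simp
      · rintro (rfl | rfl)
        exacts [⟨0, rfl⟩, ⟨1, rfl⟩]
    rw [hrange] at hw
    obtain ⟨m, n, h⟩ := Submodule.mem_span_pair.1 hw
    exact ⟨m, n, h.symm⟩
  obtain ⟨γ₁, γ₂, hg⟩ := hspan v₃
  obtain ⟨α, β, hu⟩ := hspan (X - T)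
  -- γ coordinates
  have e31 : γ₁*a^2 - γ₂*((1/2)*(a*b)) = -(1/2) * (c*a) := by
    rw [← ip1 γ₁ γ₂, ← hg]; exact h31
  have e23 : γ₂*b^2 - γ₁*((1/2)*(a*b)) = -(1/2) * (b*c) := by
    rw [← ip2 γ₁ γ₂, ← hg, real_inner_comm]; exact h23
  have hga : a * γ₁ = -c := by
    have h1 : ((3/4)*a*b^2) * (a*γ₁) = ((3/4)*a*b^2) * (-c) := by
      linear_combination b^2 * e31 + ((1/2)*(a*b)) * e23
    exact mul_left_cancel₀ (by positivity) h1
  have hgb : b * γ₂ = -c := by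
    have h1 : ((3/4)*a^2*b) * (b*γ₂) = ((3/4)*a^2*b) * (-c) := by
      linear_combination a^2 * e23 + ((1/2)*(a*b)) * e31
    exact mul_left_cancel₀ (by positivity) h1
  -- X equations
  have hXv1 : X - x₁ = (α-1)•v₁ + β•v₂ := by
    have h : X - x₁ = (X - T) - v₁ := by rw [hv₁]; abel
    rw [h, hu]; module
  have hXv2 : X - x₂ = α•v₁ + (β-1)•v₂ := by
    have h : X - x₂ = (X - T) - v₂ := by rw [hv₂]; abel
    rw [h, hu]; module
  have h12v : x₁ - x₂ = (1:ℝ)•v₁ + (-1:ℝ)•v₂ := by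
    have h : x₁ - x₂ = v₁ - v₂ := by rw [hv₁, hv₂]; abel
    rw [h]; module
  have EAeq : ⟪X - x₁, X - x₁⟫ = ⟪x₁ - x₂, x₁ - x₂⟫ := by
    rw [real_inner_self_eq_norm_mul_norm, real_inner_self_eq_norm_mul_norm,
      ← dist_eq_norm, ← dist_eq_norm, hX₁]
  have EBeq : ⟪X - x₂, X - x₂⟫ = ⟪x₁ - x₂, x₁ - x₂⟫ := by
    rw [real_inner_self_eq_norm_mul_norm, real_inner_self_eq_norm_mul_norm,
      ← dist_eq_norm, ← dist_eq_norm, hX₂]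
  rw [hXv1, h12v, ipgen, ipgen] at EAeq
  rw [hXv2, h12v, ipgen, ipgen] at EBeq
  have EA0 : a^2*α^2 + b^2*β^2 - a*b*α*β - 2*a^2*α + a*b*β - b^2 - a*b = 0 := by
    linear_combination EAeq
  have EB0 : a^2*α^2 + b^2*β^2 - a*b*α*β + a*b*α - 2*b^2*β - a^2 - a*b = 0 := by
    linear_combination EBeq
  -- the quadratic factorization
  have key : ((3:ℝ)*b^2*(a^2+a*b+b^2)) * ((a*α+b)*(a*α-(a+b))) = 0 := by
    linear_combination ((b*(a+2*b))^2 - (b^2*(β*(b*(a+2*b)) + ((b^2-a^2)+α*a*(2*a+b)))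
      - a*b*(b*(a+2*b))*(α-1))) * EA0
      + (b^2*(β*(b*(a+2*b)) + ((b^2-a^2)+α*a*(2*a+b))) - a*b*(b*(a+2*b))*(α-1)) * EB0
  have key2 : (a*α+b)*(a*α-(a+b)) = 0 := by
    have hne : ((3:ℝ)*b^2*(a^2+a*b+b^2)) ≠ 0 := by positivity
    exact (mul_eq_zero.1 key).resolve_left hne
  rcases mul_eq_zero.1 key2 with hwrong | hright
  · -- wrong apex: contradiction with side hypothesis
    exfalso
    have haα : a*α = -b := by linarith
    have hbβ : b*β = -a := by
      have h1 : (a+2*b) * (b*β) = (a+2*b) * (-a) := by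
        linear_combination EA0 - EB0 + (2*a+b) * haα
      exact mul_left_cancel₀ (by positivity) h1
    obtain ⟨p, hp, hw⟩ := AffineSubspace.wOppSide_iff_exists_wbtw.1 hXside.wOppSide
    obtain ⟨r, hr, hre⟩ := hw
    have hdir : p -ᵥ x₁ ∈ (affineSpan ℝ ({x₁, x₂} : Set (EuclideanSpace ℝ (Fin 2)))).direction :=
      AffineSubspace.vsub_mem_direction hp (left_mem_affineSpan_pair ℝ x₁ x₂)
    rw [direction_affineSpan, vectorSpan_pair, Submodule.mem_span_singleton] at hdir
    obtain ⟨t, ht⟩ := hdir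
    rw [vsub_eq_sub, vsub_eq_sub] at ht
    have hpT1 : p - T = (1+t)•v₁ + (-t)•v₂ := by
      have h : p - T = (p - x₁) + v₁ := by rw [hv₁]; abel
      rw [h, ← ht, show x₁ - x₂ = v₁ - v₂ from by rw [hv₁, hv₂]; abel]
      module
    have hpT2 : p - T = ((1-r)*α + r*γ₁)•v₁ + ((1-r)*β + r*γ₂)•v₂ := by
      have h : p = r•(x₃ - X) + X := by
        rw [← hre, AffineMap.lineMap_apply, vsub_eq_sub, vadd_eq_add]
      rw [show p - T = r • (x₃ - X) + (X - T) from by rw [h]; abel,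
        show x₃ - X = v₃ - (X - T) from by rw [hv₃]; abel, hu, hg]
      module
    obtain ⟨he1, he2⟩ := huniq _ _ _ _ (hpT1.symm.trans hpT2)
    have f1 : a*(1+t) = -((1-r)*b) - r*c := by
      linear_combination a*he1 + (1-r)*haα + r*hga
    have f2 : b*(-t) = -((1-r)*a) - r*c := by
      linear_combination b*he2 + (1-r)*hbβ + r*hgb
    have h1 : 0 ≤ (1-r)*b := mul_nonneg (by linarith [hr.2]) hb.le
    have h2 : 0 ≤ r*c := mul_nonneg hr.1 hc.le
    have h3 : 0 ≤ (1-r)*a := mul_nonneg (by linarith [hr.2]) ha.le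
    have ht1 : 1 + t ≤ 0 := by
      have h4 : a * (1+t) ≤ a * 0 := by rw [mul_zero]; linarith
      exact le_of_mul_le_mul_left h4 ha
    have ht2 : -t ≤ 0 := by
      have h4 : b * (-t) ≤ b * 0 := by rw [mul_zero]; linarith
      exact le_of_mul_le_mul_left h4 hb
    linarith
  · -- right apex
    have haα : a*α = a+b := by linarith
    have hbβ : b*β = a+b := by
      have h1 : (a+2*b) * (b*β) = (a+2*b) * (a+b) := by
        linear_combination EA0 - EB0 + (2*a+b) * haα
      exact mul_left_cancel₀ (by positivity) h1
    have hA : a*(α-γ₁) = a+b+c := by linear_combination haα - hga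
    have hB : b*(β-γ₂) = a+b+c := by linear_combination hbβ - hgb
    have hX3v : X - x₃ = (α-γ₁)•v₁ + (β-γ₂)•v₂ := by
      have h : X - x₃ = (X - T) - v₃ := by rw [hv₃]; abel
      rw [h, hu, hg]; module
    have hfin : ⟪X - x₃, X - x₃⟫ = (a+b+c)^2 := by
      rw [hX3v, ipgen]
      linear_combination (a*(α-γ₁)) * hA + (b*(β-γ₂) + (a+b+c) - a*(α-γ₁)) * hB
    have hd : dist X x₃ = a+b+c := by
      have h1 : dist X x₃ ^ 2 = (a+b+c)^2 := by
        rw [dist_eq_norm, ← real_inner_self_eq_norm_sq, hfin]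
      calc dist X x₃ = √(dist X x₃ ^ 2) := (Real.sqrt_sq dist_nonneg).symm
        _ = √((a+b+c)^2) := by rw [h1]
        _ = a+b+c := Real.sqrt_sq (by positivity)
    rw [hd, dist_eq_norm, dist_eq_norm, dist_eq_norm, ← hv₁, ← hv₂, ← hv₃]
end

section
/- Let A₁ be a vertex of a convex polygon with angle ∠A₁, W a point with |A₁W| ≤ r, and y₁, y₂ points on the two sides of the angle at A₁ with |W y₁| = |W y₂| = r. Then the angle ∠y₁ W y₂ of the quadrilateral A₁ y₁ W y₂ satisfies ∠y₁ W y₂ ≥ 2π − 2∠A₁; in particular if ∠A₁ < 2π/3 then ∠y₁ W y₂ > 2π/3. -/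
open Real EuclideanGeometry

/-! In the triangles `A₁ yᵢ W` the side `A₁W` is at most `|W yᵢ| = r`, so the angle at `yᵢ`
is at most the angle at `A₁`. Since `W` splits the angle at `A₁`, the angles of the
quadrilateral at `y₁` and `y₂` sum to at most `∠A₁`, and the angle sum gives the bound at `W`. -/

namespace EuclideanGeometry

variable {V P : Type*} [NormedAddCommGroup V] [InnerProductSpace ℝ V] [MetricSpace P]
  [NormedAddTorsor V P]

theorem angle_le_angle_of_dist_le {a b c : P} (h : dist a c ≤ dist c b) :
    ∠ a b c ≤ ∠ c a b := by
  by_cases hcol : Collinear ℝ ({a, b, c} : Set P)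
  · rcases collinear_iff_eq_or_eq_or_angle_eq_zero_or_angle_eq_pi.mp hcol with
      rfl | rfl | hzero | hpi
    · simp
    · obtain rfl : a = c := dist_le_zero.mp (by simpa using h)
      simp
    · exact hzero ▸ angle_nonneg _ _ _
    · -- `b` lies strictly between `a` and `c`, so `a c` is the longest side.
      have hab := left_dist_ne_zero_of_angle_eq_pi hpi
      have hac := dist_eq_add_dist_of_angle_eq_pi hpi
      linarith [dist_nonneg.lt_of_ne' hab]
  · rw [angle_comm a b c, angle_le_iff_dist_le]
    · rwa [dist_comm]
    · rwa [Set.insert_comm, Set.pair_comm]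

end EuclideanGeometry

theorem quadrilateral_angle_at_W_ge_general
    (A₁ W y₁ y₂ : EuclideanSpace ℝ (Fin 2)) (r ω : ℝ)
    (hAW : dist A₁ W ≤ r)
    (hy₁ : dist W y₁ = r) (hy₂ : dist W y₂ = r)
    (hsplit : ∠ y₁ A₁ W + ∠ W A₁ y₂ = ∠ y₁ A₁ y₂)
    (hω : ω = 2 * π - ∠ y₁ A₁ y₂ - ∠ A₁ y₁ W - ∠ A₁ y₂ W) :
    ω ≥ 2 * π - 2 * ∠ y₁ A₁ y₂ ∧ (∠ y₁ A₁ y₂ < 2 * π / 3 → ω > 2 * π / 3) := by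
  have h₁ : ∠ A₁ y₁ W ≤ ∠ y₁ A₁ W :=
    angle_comm W A₁ y₁ ▸ angle_le_angle_of_dist_le (hy₁ ▸ hAW)
  have h₂ : ∠ A₁ y₂ W ≤ ∠ W A₁ y₂ := angle_le_angle_of_dist_le (hy₂ ▸ hAW)
  have hbase : ∠ A₁ y₁ W + ∠ A₁ y₂ W ≤ ∠ y₁ A₁ y₂ := by linarith
  exact ⟨by linarith, fun _ => by linarith⟩

/-- Let `A₁` be a vertex of a convex polygon with angle `∠A₁ = ∠ y₁ A₁ y₂`, where
`y₁`, `y₂` lie on the two sides of the angle at `A₁` (so that `W` lies inside the angle: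
`∠ y₁ A₁ W + ∠ W A₁ y₂ = ∠ y₁ A₁ y₂`), and let `W` satisfy `|A₁W| ≤ r`,
`|Wy₁| = |Wy₂| = r`. Then the interior angle `ω` of the quadrilateral `A₁ y₁ W y₂` at `W`
(given by the angle sum `ω = 2π − ∠A₁ − ∠ A₁ y₁ W − ∠ A₁ y₂ W`) satisfies
`ω ≥ 2π − 2∠A₁`; in particular if `∠A₁ < 2π/3` then `ω > 2π/3`. -/
theorem quadrilateral_angle_at_W_ge
    (A₁ W y₁ y₂ : EuclideanSpace ℝ (Fin 2)) (r ω : ℝ) (hr : 0 < r)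
    (hAW : dist A₁ W ≤ r)
    (hy₁ : dist W y₁ = r) (hy₂ : dist W y₂ = r)
    (hsplit : ∠ y₁ A₁ W + ∠ W A₁ y₂ = ∠ y₁ A₁ y₂)
    (hω : ω = 2 * π - ∠ y₁ A₁ y₂ - ∠ A₁ y₁ W - ∠ A₁ y₂ W) :
    ω ≥ 2 * π - 2 * ∠ y₁ A₁ y₂ ∧ (∠ y₁ A₁ y₂ < 2 * π / 3 → ω > 2 * π / 3) :=
  quadrilateral_angle_at_W_ge_general A₁ W y₁ y₂ r ω hAW hy₁ hy₂ hsplit hω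
end

section
/- Suppose 2α + 2β = 4π/3 + π/2, i.e. β = 11π/12 − α. If additionally 2cos²α = cos(4π/3 − 2α), then sin(2π/3)·sin(2α − 2π/3) = 1/2, and hence α = (arcsin(1/√3) + 2π/3)/2. -/
open Real

/-- Trigonometric computation from Case 2: if `α ∈ [5π/12, π/2]`,
`2α + 2β = 4π/3 + π/2` (i.e. `β = 11π/12 − α`), and `2 cos² α = cos (4π/3 − 2α)`, then
`sin (2π/3) · sin (2α − 2π/3) = 1/2` and hence `α = (arcsin (1/√3) + 2π/3)/2`. -/
theorem case2_angle_equation (α β : ℝ)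
    (hα : α ∈ Set.Icc (5 * π / 12) (π / 2))
    (hβ : 2 * α + 2 * β = 4 * π / 3 + π / 2)
    (h : 2 * cos α ^ 2 = cos (4 * π / 3 - 2 * α)) :
    sin (2 * π / 3) * sin (2 * α - 2 * π / 3) = 1 / 2 ∧
      α = (arcsin (1 / Real.sqrt 3) + 2 * π / 3) / 2 := by
  have hs3 : Real.sqrt 3 ^ 2 = 3 := Real.sq_sqrt (by norm_num)
  have hs3pos : (0:ℝ) < Real.sqrt 3 := Real.sqrt_pos.mpr (by norm_num)
  have hc43 : cos (4 * π / 3) = -(1/2) := by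
    have : (4 * π / 3) = π + π / 3 := by ring
    rw [this, Real.cos_add]
    simp [Real.cos_pi_div_three]
  have hsin43 : sin (4 * π / 3) = -(Real.sqrt 3 / 2) := by
    have : (4 * π / 3) = π + π / 3 := by ring
    rw [this, Real.sin_add]
    simp [Real.sin_pi_div_three]
  have hsin23 : sin (2 * π / 3) = Real.sqrt 3 / 2 := by
    have : (2 * π / 3) = π - π / 3 := by ring
    rw [this, Real.sin_pi_sub, Real.sin_pi_div_three]
  have hcos23 : cos (2 * π / 3) = -(1/2) := by
    have : (2 * π / 3) = π - π / 3 := by ring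
    rw [this, Real.cos_pi_sub, Real.cos_pi_div_three]
  have hcos2 : cos (2 * α) = 2 * cos α ^ 2 - 1 := Real.cos_two_mul α
  have hexp : cos (4 * π / 3 - 2 * α)
      = cos (4 * π / 3) * cos (2 * α) + sin (4 * π / 3) * sin (2 * α) :=
    Real.cos_sub _ _
  have hsinexp : sin (2 * α - 2 * π / 3)
      = sin (2 * α) * cos (2 * π / 3) - cos (2 * α) * sin (2 * π / 3) :=
    Real.sin_sub _ _
  -- derive key linear relation
  have hkey : 3 * cos (2 * α) + Real.sqrt 3 * sin (2 * α) = -2 := by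
    rw [hexp, hc43, hsin43] at h
    nlinarith [hcos2]
  have h1 : sin (2 * π / 3) * sin (2 * α - 2 * π / 3) = 1 / 2 := by
    rw [hsinexp, hsin23, hcos23]
    nlinarith [hkey]
  refine ⟨h1, ?_⟩
  have hsval : sin (2 * α - 2 * π / 3) = 1 / Real.sqrt 3 := by
    rw [hsin23] at h1
    rw [eq_div_iff hs3pos.ne']
    nlinarith [h1]
  have hpi : (0:ℝ) < π := Real.pi_pos
  obtain ⟨hl, hr⟩ := hα
  have harcsin : arcsin (sin (2 * α - 2 * π / 3)) = 2 * α - 2 * π / 3 := by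
    apply Real.arcsin_sin <;> nlinarith
  rw [hsval] at harcsin
  linarith
end

section
/- Let W₁ = (x + r cos α, r sin α), W₂ = (r sin β, y + r cos β) with β = 11π/12 − α, and let V be the point satisfying V = W₁ + l₁(cos 2α, sin 2α) = W₂ + l₂(sin 2β, cos 2β). Then l₁ = −(2/√3)(x cos 2β + y sin 2β + r cos(α + 2β) + r sin β) and l₂ = −(2/√3)(y cos 2α + x sin 2α + r cos(2α + β) + r sin α). -/
open Real

/-- Solving the linear system for the Steiner point `V`: with
`W₁ = (x + r cos α, r sin α)`, `W₂ = (r sin β, y + r cos β)`, `β = 11π/12 − α`, if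
`V = W₁ + l₁ (cos 2α, sin 2α) = W₂ + l₂ (sin 2β, cos 2β)`, then
`l₁ = −(2/√3)(x cos 2β + y sin 2β + r cos (α + 2β) + r sin β)` and
`l₂ = −(2/√3)(y cos 2α + x sin 2α + r cos (2α + β) + r sin α)`. -/
theorem steiner_point_system_solution
    (x y r α β l₁ l₂ : ℝ) (V : ℝ × ℝ)
    (hβ : β = 11 * π / 12 - α)
    (hV₁ : V = (x + r * cos α, r * sin α) + l₁ • (cos (2 * α), sin (2 * α)))
    (hV₂ : V = (r * sin β, y + r * cos β) + l₂ • (sin (2 * β), cos (2 * β))) :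
    l₁ = -(2 / Real.sqrt 3) *
        (x * cos (2 * β) + y * sin (2 * β) + r * cos (α + 2 * β) + r * sin β) ∧
    l₂ = -(2 / Real.sqrt 3) *
        (y * cos (2 * α) + x * sin (2 * α) + r * cos (2 * α + β) + r * sin α) := by
  have hs0 : (0:ℝ) < Real.sqrt 3 := Real.sqrt_pos.mpr (by norm_num)
  have hs3 : Real.sqrt 3 ≠ 0 := ne_of_gt hs0
  have h := hV₁.symm.trans hV₂
  rw [Prod.ext_iff] at h
  simp only [Prod.fst_add, Prod.snd_add, Prod.smul_mk, smul_eq_mul] at h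
  obtain ⟨h1, h2⟩ := h
  have hc : cos (2*α) * cos (2*β) - sin (2*α) * sin (2*β) = Real.sqrt 3 / 2 := by
    have e : 2*α + 2*β = 2*π - π/6 := by rw [hβ]; ring
    have := Real.cos_add (2*α) (2*β)
    rw [e, Real.cos_two_pi_sub, Real.cos_pi_div_six] at this
    linarith
  have hc1 : cos (α + 2*β) = cos α * cos (2*β) - sin α * sin (2*β) := Real.cos_add α (2*β)
  have hc2 : cos (2*α + β) = cos (2*α) * cos β - sin (2*α) * sin β := Real.cos_add (2*α) β
  have hs1 : sin (2*β) * cos β - cos (2*β) * sin β = sin β := by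
    have hβ' := Real.sin_sub (2*β) β
    rw [show 2*β - β = β by ring] at hβ'
    linarith
  have hs2 : sin (2*α) * cos α - cos (2*α) * sin α = sin α := by
    have hα' := Real.sin_sub (2*α) α
    rw [show 2*α - α = α by ring] at hα'
    linarith
  constructor
  · have k1 : l₁ * Real.sqrt 3 =
        -2 * (x * cos (2*β) + y * sin (2*β) + r * cos (α + 2*β) + r * sin β) := by
      linear_combination 2*cos (2*β)*h1 - 2*sin (2*β)*h2 - 2*l₁*hc - 2*r*hs1 + 2*r*hc1
    field_simp
    linarith [k1]
  · have k2 : l₂ * Real.sqrt 3 =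
        -2 * (y * cos (2*α) + x * sin (2*α) + r * cos (2*α + β) + r * sin α) := by
      linear_combination 2*sin (2*α)*h1 - 2*cos (2*α)*h2 - 2*l₂*hc - 2*r*hs2 + 2*r*hc2
    field_simp
    linarith [k2]
end
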